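/- arXiv:0911.3674 — 4 statements merged into one kernel-verified Lean document; each statement's English description precedes it below -/
import Mathlib

section
/- Let ⟨S,R⟩ be a set of terms with restricted regular constraints and let s ∈ S satisfy the infinite-instances property in ⟨S,R⟩. Then L(⟨S,R⟩) is not a regular term language. -/
namespace RITRC

/-- Terms over a signature (symbols `F` with arities `ar`) with variables in `V`. -/
inductive Term (F : Type) (ar : F → ℕ) (V : Type) : Type where
  | var : V → Term F ar V
  | app : (f : F) → (Fin (ar f) → Term F ar V) → Term F ar V

/-- Ground terms (terms without variables). -/
abbrev GTerm (F : Type) (ar : F → ℕ) : Type := Term F ar Empty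

variable {F V V' Q : Type} {ar : F → ℕ}

/-- Applying a substitution to a term. -/
def Term.subst (φ : V → Term F ar V') : Term F ar V → Term F ar V'
  | .var x => φ x
  | .app f ts => .app f (fun i => (ts i).subst φ)

/-- The height of a term. -/
def Term.height : Term F ar V → ℕ
  | .var _ => 0
  | .app _ ts => Finset.univ.sup (fun i => (ts i).height + 1)

/-- The size of a term. -/
def Term.size : Term F ar V → ℕ
  | .var _ => 1
  | .app _ ts => 1 + ∑ i, (ts i).size

/-- The subterm of a term at a position (a list of child indices), if it exists. -/
def Term.sub : Term F ar V → List ℕ → Option (Term F ar V)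
  | t, [] => some t
  | .var _, _ :: _ => none
  | .app f ts, i :: p => if h : i < ar f then (ts ⟨i, h⟩).sub p else none

/-- The root symbol of a term: a function symbol or a variable. -/
def Term.rootSym : Term F ar V → F ⊕ V
  | .var x => .inr x
  | .app f _ => .inl f

/-- `p` is a position of `t`. -/
def Term.isPos (t : Term F ar V) (p : List ℕ) : Prop := t.sub p ≠ none

/-- `p` is a variable position of `t`. -/
def Term.isVarPos (t : Term F ar V) (p : List ℕ) : Prop :=
  ∃ x, t.sub p = some (Term.var x)

/-- `p` is a non-variable position of `t`. -/
def Term.isNonVarPos (t : Term F ar V) (p : List ℕ) : Prop :=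
  ∃ f ts, t.sub p = some (Term.app f ts)

/-- The variable `x` occurs in `t`. -/
def Term.varOccurs (t : Term F ar V) (x : V) : Prop :=
  ∃ p, t.sub p = some (Term.var x)

/-- The variable `x` occurs at least twice in `t`. -/
def Term.occursTwice (t : Term F ar V) (x : V) : Prop :=
  ∃ p q, p ≠ q ∧ t.sub p = some (Term.var x) ∧ t.sub q = some (Term.var x)

/-- `t` is determined at position `p`: either `p` is a non-variable position
of `t`, or some prefix of `p` is labeled by a constant symbol. -/
def Term.determinedAt (t : Term F ar V) (p : List ℕ) : Prop :=
  t.isNonVarPos p ∨ ∃ p', p' <+: p ∧ ∃ f ts, t.sub p' = some (Term.app f ts) ∧ ar f = 0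

/-- A deterministic tree automaton: at most one transition `f(q₁,…,qₖ) → q`
for every `f` and states `q₁,…,qₖ`. -/
structure DTA (F : Type) (ar : F → ℕ) (Q : Type) : Type where
  δ : (f : F) → (Fin (ar f) → Q) → Option Q

/-- Collect a family of optional values into an optional family. -/
def allSome {n : ℕ} {α : Type} (g : Fin n → Option α) : Option (Fin n → α) :=
  if h : ∀ i, (g i).isSome then some (fun i => (g i).get (h i)) else none

/-- The state reached by `A` on a term, where variables are pre-assigned states by `C`. -/
def DTA.runC (A : DTA F ar Q) (C : V → Q) : Term F ar V → Option Q
  | .var x => some (C x)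
  | .app f ts => (allSome (fun i => A.runC C (ts i))).bind (A.δ f)

/-- The state reached by `A` on a ground term. -/
def DTA.run (A : DTA F ar Q) : GTerm F ar → Option Q :=
  A.runC (fun x => x.elim)

/-- `L(A,q)`: the set of ground terms on which `A` reaches state `q`. -/
def DTA.lang (A : DTA F ar Q) (q : Q) : Set (GTerm F ar) :=
  {t | A.run t = some q}

/-- `A` is complete. -/
def DTA.Complete (A : DTA F ar Q) : Prop :=
  ∀ (f : F) (qs : Fin (ar f) → Q), (A.δ f qs).isSome

/-- `A` is a 1-or-n DTA: each state has exactly one, or at least `n`, terms. -/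
def DTA.OneOr (A : DTA F ar Q) (n : ℕ) : Prop :=
  ∀ q : Q, (A.lang q).encard = 1 ∨ (n : ℕ∞) ≤ (A.lang q).encard

/-- The number of transitions of a DTA. -/
noncomputable def DTA.numTrans [Fintype F] [Fintype Q] (A : DTA F ar Q) : ℕ :=
  ∑ f : F, ∑ qs : Fin (ar f) → Q, if (A.δ f qs).isSome then 1 else 0

/-- A set of ground terms is regular if it is recognized by some (finite) DTA. -/
def IsRegular (L : Set (GTerm F ar)) : Prop :=
  ∃ (Q : Type) (_ : Fintype Q) (A : DTA F ar Q) (Facc : Set Q),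
    L = {t | ∃ q ∈ Facc, A.run t = some q}

/-- A DTA bundled with its (finite) state type and accepting states. -/
structure NDTA (F : Type) (ar : F → ℕ) : Type 1 where
  Q : Type
  fin : Fintype Q
  A : DTA F ar Q
  acc : Set Q

/-- The language recognized by a bundled DTA. -/
def NDTA.lang (N : NDTA F ar) : Set (GTerm F ar) :=
  {t | ∃ q ∈ N.acc, N.A.run t = some q}

/-- The size of a bundled DTA: number of states plus sum of sizes of transitions. -/
noncomputable def NDTA.size [Fintype F] (N : NDTA F ar) : ℕ :=
  letI := N.fin
  Fintype.card N.Q +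
    ∑ f : F, ∑ qs : Fin (ar f) → N.Q, if (N.A.δ f qs).isSome then ar f + 2 else 0

/-- `L(⟨S,M⟩)`: the language of a set of terms `S` with regular constraints `M`. -/
def langM (S : Set (Term F ar V)) (M : V → NDTA F ar) : Set (GTerm F ar) :=
  {t | ∃ s ∈ S, ∃ φ : V → GTerm F ar, (∀ x, φ x ∈ (M x).lang) ∧ t = s.subst φ}

/-- `L(⟨S,R⟩)` for a single regular constraint `R = ⟨A,C⟩`. -/
def langSingle (S : Set (Term F ar V)) (A : DTA F ar Q) (C : V → Q) :
    Set (GTerm F ar) :=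
  {t | ∃ s ∈ S, ∃ φ : V → GTerm F ar, (∀ x, A.run (φ x) = some (C x)) ∧ t = s.subst φ}

/-- A restricted regular constraint `R = ⟨A,V,C,W,h⟩`. -/
structure RRC (F : Type) (ar : F → ℕ) (V Q : Type) : Type where
  A : DTA F ar Q
  C : V → Q
  W : Set V
  hgt : ℕ

/-- A solution of a restricted regular constraint. -/
def RRC.IsSolution (R : RRC F ar V Q) (φ : V → GTerm F ar) : Prop :=
  (∀ x, R.A.run (φ x) = some (R.C x)) ∧ ∀ x ∈ R.W, (φ x).height ≤ R.hgt

/-- `L(⟨S,R⟩)` for a restricted regular constraint `R`. -/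
def RRC.lang (R : RRC F ar V Q) (S : Set (Term F ar V)) : Set (GTerm F ar) :=
  {t | ∃ s ∈ S, ∃ φ, R.IsSolution φ ∧ t = s.subst φ}

/-- Renaming the variables of a term. -/
def Term.rename (ρ : V → V') (t : Term F ar V) : Term F ar V' :=
  t.subst (fun x => Term.var (ρ x))

/-- `s` and `t` are structurally similar: `t` is obtained from `s` by an
injective variable renaming. -/
def StructSim (s : Term F ar V) (t : Term F ar V') : Prop :=
  ∃ ρ : V → V', Function.Injective ρ ∧ t = s.rename ρ

/-- `s` and `t` are structurally equal with respect to the state assignment `C`. -/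
def StructEq (C : V → Q) (s t : Term F ar V) : Prop :=
  StructSim s t ∧
    ∀ p x y, s.sub p = some (Term.var x) → t.sub p = some (Term.var y) → C x = C y

/-- `s` is structurally subsumed by `t` (with respect to `A` and `C`). -/
def StructSub (A : DTA F ar Q) (C : V → Q) (s t : Term F ar V) : Prop :=
  (∀ p f ts, t.sub p = some (Term.app f ts) →
    ∃ sp, s.sub p = some sp ∧ sp.rootSym = Sum.inl f) ∧
  (∀ p tp, t.sub p = some tp → ∃ sp, s.sub p = some sp ∧ A.runC C tp = A.runC C sp)

/-- Building a binary term `f(t,u)` from a symbol of arity 2. -/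
def mkBin {f : F} (h : ar f = 2) (t u : Term F ar V) : Term F ar V :=
  Term.app f (fun i => if (i : ℕ) = 0 then t else u)

/-- `s` satisfies the infinite-instances property in `⟨S,R⟩`. -/
def InfiniteInstances (R : RRC F ar V Q) (S : Set (Term F ar V)) (s : Term F ar V) :
    Prop :=
  ∃ x, s.occursTwice x ∧
    ∃ φ : ℕ → (V → GTerm F ar),
      (∀ i, R.IsSolution (φ i)) ∧
      (∀ i, s.subst (φ i) ∉ R.lang (S \ {s})) ∧
      (∀ i j, i ≠ j → φ i x ≠ φ j x)

/-- The set of prefixes of a finite set of positions. -/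
def prefixes (P : Finset (List ℕ)) : Finset (List ℕ) :=
  P.biUnion (fun p => p.inits.toFinset)

/-! Suppose a DTA `B` recognises `L(⟨S,R⟩)`, let `x` occur at positions `p ≠ q` of `s`, and write
`tᵢ = s φᵢ`, `uᵢ = φᵢ(x)`. Passing to a subsequence, all `uᵢ` reach the same state of `B` and their
heights do not decrease. Then each mixed term `tᵢ[p ← uⱼ]` lies in the language but, carrying
different subterms at `p` and `q`, is no instance of `s`, hence an instance of some
`s' ∈ S - {s}`. Ramsey's theorem yields `i < j < k` such that `tᵢ[p ← uⱼ]`, `tᵢ[p ← uₖ]` and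
`tⱼ[p ← uₖ]` are instances of one and the same `s'`.
* If `p` is a non-variable position of `s'`, the three matchers glue to a matcher of `s'`
  against `tⱼ`.
* If `p` lies at or below an occurrence of a variable `y` of `s'` and `y` occurs elsewhere too,
  that other occurrence forces `uⱼ = uₖ`.
* If `y` occurs only there, binding `y` to the corresponding subterm of `tᵢ` matches `s'`
  against `tᵢ`; the height bound survives because `uᵢ` is no higher than `uⱼ`.
Either way some `tᵢ` is an instance of `S - {s}`, which the hypothesis excludes.
-/

-- `t[p ← v]`; a position outside `t` leaves `t` unchanged.
def Term.replaceAt : Term F ar V → List ℕ → Term F ar V → Term F ar V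
  | _, [], v => v
  | .var x, _ :: _, _ => .var x
  | .app f ts, i :: p, v =>
      if h : i < ar f then .app f (Function.update ts ⟨i, h⟩ ((ts ⟨i, h⟩).replaceAt p v))
      else .app f ts

namespace Term

@[simp] lemma sub_nil (t : Term F ar V) : t.sub [] = some t := by cases t <;> rfl

@[simp] lemma replaceAt_nil (t v : Term F ar V) : t.replaceAt [] v = v := by cases t <;> rfl

@[simp] lemma sub_var_cons (x : V) (i : ℕ) (p : List ℕ) :
    (var x : Term F ar V).sub (i :: p) = none := rfl

section App

variable {f : F} {ts : Fin (ar f) → Term F ar V} {i : ℕ} {p : List ℕ}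

@[simp] lemma sub_app_cons (h : i < ar f) : (app f ts).sub (i :: p) = (ts ⟨i, h⟩).sub p :=
  dif_pos h

@[simp] lemma sub_app_cons_of_le (h : ar f ≤ i) : (app f ts).sub (i :: p) = none :=
  dif_neg h.not_gt

@[simp] lemma replaceAt_app_cons (h : i < ar f) (v : Term F ar V) :
    (app f ts).replaceAt (i :: p) v =
      app f (Function.update ts ⟨i, h⟩ ((ts ⟨i, h⟩).replaceAt p v)) :=
  dif_pos h

@[simp] lemma replaceAt_app_cons_of_le (h : ar f ≤ i) (v : Term F ar V) :
    (app f ts).replaceAt (i :: p) v = app f ts :=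
  dif_neg h.not_gt

end App

lemma sub_append (t : Term F ar V) (p r : List ℕ) :
    t.sub (p ++ r) = (t.sub p).bind (·.sub r) := by
  fun_induction t.sub p <;> simp_all

lemma sub_replaceAt_self (t v : Term F ar V) (p : List ℕ) :
    (t.replaceAt p v).sub p = (t.sub p).map fun _ => v := by
  fun_induction t.replaceAt p v <;> simp_all

lemma sub_replaceAt_of_not_prefix (t v : Term F ar V) {p q : List ℕ} (hpq : ¬ p <+: q)
    (hqp : ¬ q <+: p) : (t.replaceAt p v).sub q = t.sub q := by
  induction t, p, v using replaceAt.induct generalizing q with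
  | case1 => simp at hpq
  | case2 => rfl
  | case3 f ts i p v h ih =>
    cases q with
    | nil => simp at hqp
    | cons j q =>
      simp only [List.cons_prefix_cons, not_and] at hpq hqp
      by_cases hj : j < ar f
      · by_cases hij : i = j
        · subst hij; simp_all
        · have : (⟨j, hj⟩ : Fin (ar f)) ≠ ⟨i, h⟩ := by simp [Fin.ext_iff]; omega
          simp [h, hj, Function.update_of_ne this]
      · simp [h, not_lt.mp hj]
  | case4 _ _ _ _ _ h => simp [not_lt.mp h]

lemma replaceAt_append {t w : Term F ar V} {p : List ℕ} (h : t.sub p = some w) (r : List ℕ)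
    (v : Term F ar V) : t.replaceAt (p ++ r) v = t.replaceAt p (w.replaceAt r v) := by
  fun_induction t.replaceAt p v <;> simp_all

lemma replaceAt_eq_self {t w : Term F ar V} {p : List ℕ} (h : t.sub p = some w) :
    t.replaceAt p w = t := by
  fun_induction t.replaceAt p w <;> simp_all

@[simp] lemma replaceAt_replaceAt (t v v' : Term F ar V) (p : List ℕ) :
    (t.replaceAt p v).replaceAt p v' = t.replaceAt p v' := by
  fun_induction t.replaceAt p v <;> simp_all

lemma runC_replaceAt_congr (A : DTA F ar Q) (C : V → Q) (t : Term F ar V) (p : List ℕ)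
    {u v : Term F ar V} (h : A.runC C u = A.runC C v) :
    A.runC C (t.replaceAt p u) = A.runC C (t.replaceAt p v) := by
  induction t, p, u using replaceAt.induct with
  | case1 => simpa using h
  | case2 => rfl
  | case3 f ts i p u hi ih =>
    simp only [replaceAt_app_cons hi, DTA.runC]
    congr 2
    funext k
    rcases eq_or_ne k ⟨i, hi⟩ with rfl | hk <;> simp [Function.update_of_ne, *]
  | case4 _ _ _ _ _ hi => simp [not_lt.mp hi]

lemma height_replaceAt_mono (t : Term F ar V) (p : List ℕ) {u v : Term F ar V}
    (h : u.height ≤ v.height) : (t.replaceAt p u).height ≤ (t.replaceAt p v).height := by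
  induction t, p, u using replaceAt.induct with
  | case1 => simpa using h
  | case2 => rfl
  | case3 f ts i p u hi ih =>
    simp only [replaceAt_app_cons hi, height]
    refine Finset.sup_mono_fun fun k _ => ?_
    rcases eq_or_ne k ⟨i, hi⟩ with rfl | hk <;> simp [Function.update_of_ne, *]
  | case4 _ _ _ _ _ hi => simp [not_lt.mp hi]

variable {φ : V → Term F ar V'}

lemma sub_subst {s w : Term F ar V} {p : List ℕ} (h : s.sub p = some w) :
    (s.subst φ).sub p = some (w.subst φ) := by
  fun_induction s.sub p <;> simp_all [subst]

lemma eq_of_prefix_of_sub_var {s : Term F ar V} {p q : List ℕ} {z : V}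
    (hq : s.sub q = some (var z)) (hp : s.sub p ≠ none) (hqp : q <+: p) : q = p := by
  obtain ⟨r, rfl⟩ := hqp
  cases r with
  | nil => simp
  | cons i r => simp [sub_append, hq] at hp

lemma exists_app_or_var_prefix_of_sub_subst {s : Term F ar V} {p : List ℕ}
    (h : (s.subst φ).sub p ≠ none) :
    (∃ f ts, s.sub p = some (app f ts)) ∨ ∃ p₀ y r, p = p₀ ++ r ∧ s.sub p₀ = some (var y) := by
  induction s, p using sub.induct with
  | case1 s => cases s <;> simp
  | case2 y i p => exact .inr ⟨[], y, i :: p, rfl, rfl⟩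
  | case3 f ts i p hi ih =>
    simp only [subst, sub_app_cons hi] at h ⊢
    rcases ih h with hw | ⟨p₀, y, r, rfl, hy⟩
    · exact .inl hw
    · exact .inr ⟨i :: p₀, y, r, rfl, by simpa [hi] using hy⟩
  | case4 f ts i p hi => simp [subst, not_lt.mp hi] at h

lemma subst_congr {ψ χ : V → Term F ar V'} (t : Term F ar V)
    (h : ∀ z q, t.sub q = some (var z) → ψ z = χ z) : t.subst ψ = t.subst χ := by
  induction t with
  | var z => exact h z [] rfl
  | app f ts ih =>
    simp only [subst, app.injEq, heq_eq_eq, true_and]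
    exact funext fun k => ih k fun z q hq => h z (k :: q) (by simpa using hq)

lemma subst_eq_replaceAt {ψ χ : V → Term F ar V'} {s w : Term F ar V} {p : List ℕ}
    (hw : s.sub p = some w) (h : ∀ z q, s.sub q = some (var z) → ψ z ≠ χ z → p <+: q) :
    s.subst ψ = (s.subst χ).replaceAt p (w.subst ψ) := by
  induction s, p using sub.induct with
  | case1 => simp_all
  | case2 => simp at hw
  | case3 f ts i p hi ih =>
    simp only [subst, replaceAt_app_cons hi, app.injEq, heq_eq_eq, true_and]
    funext k
    rcases eq_or_ne k ⟨i, hi⟩ with rfl | hk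
    · simp only [Function.update_self]
      refine ih (by simpa [hi] using hw) fun z q hq hz => ?_
      simpa using h z (i :: q) (by simpa [hi] using hq) hz
    · rw [Function.update_of_ne hk]
      refine subst_congr _ fun z q hq => ?_
      by_contra hz
      have := (List.cons_prefix_cons.mp (h z (k :: q) (by simpa using hq) hz)).1
      exact hk (Fin.ext this.symm)
  | case4 f ts i p hi => simp [not_lt.mp hi] at hw

lemma subst_update_eq_replaceAt [DecidableEq V] {ψ : V → Term F ar V'} {s : Term F ar V}
    {p : List ℕ} {y : V} (hy : s.sub p = some (var y))
    (huniq : ∀ q, s.sub q = some (var y) → q = p) (v : Term F ar V') :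
    s.subst (Function.update ψ y v) = (s.subst ψ).replaceAt p v := by
  have := subst_eq_replaceAt (ψ := Function.update ψ y v) (χ := ψ) hy fun z q hq hz => by
    obtain rfl : z = y := by by_contra hzy; simp [hzy] at hz
    exact (huniq q hq).symm ▸ List.prefix_refl p
  simpa [subst] using this

lemma runC_replaceAt_of_sub (A : DTA F ar Q) (C : V → Q) {t u v : Term F ar V} {p : List ℕ}
    (hu : t.sub p = some u) (h : A.runC C v = A.runC C u) :
    A.runC C (t.replaceAt p v) = A.runC C t := by
  rw [runC_replaceAt_congr A C t p h, replaceAt_eq_self hu]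

variable {ψ ψ₁ ψ₂ ψ₃ : V → Term F ar V'} {a b v v₁ v₂ : Term F ar V'}

lemma subst_eq_of_subst_eq_replaceAt {s w : Term F ar V} {p : List ℕ} (hw : s.sub p = some w)
    (h : s.subst ψ = a.replaceAt p v) : w.subst ψ = v := by
  have := congrArg (sub · p) h
  rw [sub_subst hw, sub_replaceAt_self] at this
  rcases ha : a.sub p with _ | u <;> simp_all

lemma sub_eq_of_subst_eq_replaceAt {s w : Term F ar V} {p q : List ℕ} (hw : s.sub q = some w)
    (hpq : ¬ p <+: q) (hqp : ¬ q <+: p) (h : s.subst ψ = a.replaceAt p v) :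
    a.sub q = some (w.subst ψ) := by
  rw [← sub_replaceAt_of_not_prefix a v hpq hqp, ← h, sub_subst hw]

lemma eq_of_subst_eq_replaceAt {s : Term F ar V} {p q r : List ℕ} {y : V}
    (hp : s.sub p = some (var y)) (hq : s.sub q = some (var y)) (hpq : p ≠ q)
    (ha : a.sub (p ++ r) ≠ none) (h₁ : s.subst ψ₁ = a.replaceAt (p ++ r) v₁)
    (h₂ : s.subst ψ₂ = a.replaceAt (p ++ r) v₂) : v₁ = v₂ := by
  have hprq : ¬ p ++ r <+: q := fun h =>
    hpq (eq_of_prefix_of_sub_var hp (by simp [hq]) ((List.prefix_append p r).trans h))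
  have hqpr : ¬ q <+: p ++ r := fun h => by
    rcases List.prefix_or_prefix_of_prefix h (List.prefix_append p r) with h | h
    · exact hpq (eq_of_prefix_of_sub_var hq (by simp [hp]) h).symm
    · exact hpq (eq_of_prefix_of_sub_var hp (by simp [hq]) h)
  have hy : ψ₁ y = ψ₂ y := by
    simpa [subst] using (sub_eq_of_subst_eq_replaceAt hq hprq hqpr h₁).symm.trans
      (sub_eq_of_subst_eq_replaceAt hq hprq hqpr h₂)
  have : (s.subst ψ₁).sub (p ++ r) = (s.subst ψ₂).sub (p ++ r) := by
    simp [sub_append, sub_subst hp, subst, hy]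
  obtain ⟨u, hu⟩ := Option.ne_none_iff_exists'.mp ha
  simpa [h₁, h₂, sub_replaceAt_self, hu] using this

lemma subst_update_eq_of_subst_eq_replaceAt [DecidableEq V] {s : Term F ar V} {p r : List ℕ}
    {y : V} (hp : s.sub p = some (var y)) (huniq : ∀ q, s.sub q = some (var y) → q = p)
    {w : Term F ar V'} (hw : a.sub p = some w) (h : s.subst ψ = a.replaceAt (p ++ r) v) :
    ψ y = w.replaceAt r v ∧ s.subst (Function.update ψ y w) = a := by
  rw [replaceAt_append hw] at h
  refine ⟨subst_eq_of_subst_eq_replaceAt hp h, ?_⟩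
  rw [subst_update_eq_replaceAt hp huniq, h, replaceAt_replaceAt, replaceAt_eq_self hw]

lemma exists_subst_eq_of_sub_app {s : Term F ar V} {p : List ℕ} {f : F}
    {ts : Fin (ar f) → Term F ar V} (hw : s.sub p = some (app f ts)) (hb : b.sub p = some v₁)
    (h₁ : s.subst ψ₁ = a.replaceAt p v₁) (h₂ : s.subst ψ₂ = a.replaceAt p v₂)
    (h₃ : s.subst ψ₃ = b.replaceAt p v₂) :
    ∃ ψ : V → Term F ar V', (∀ z, ψ z = ψ₁ z ∨ ψ z = ψ₃ z) ∧ s.subst ψ = b := by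
  classical
  have hout : ∀ z q, s.sub q = some (var z) → ¬ p <+: q → ψ₁ z = ψ₂ z := by
    intro z q hq hpq
    have hqp : ¬ q <+: p := fun hqp => by
      obtain rfl := eq_of_prefix_of_sub_var hq (by simp [hw]) hqp
      simp [hq] at hw
    simpa [subst] using (sub_eq_of_subst_eq_replaceAt hq hpq hqp h₁).symm.trans
      (sub_eq_of_subst_eq_replaceAt hq hpq hqp h₂)
  have hin : ∀ z q, (app f ts).sub q = some (var z) → ψ₂ z = ψ₃ z := by
    intro z q hq
    have := congrArg (sub · q) ((subst_eq_of_subst_eq_replaceAt hw h₂).trans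
      (subst_eq_of_subst_eq_replaceAt hw h₃).symm)
    rw [sub_subst hq, sub_subst hq] at this
    simpa [subst] using this
  -- variables occurring only below `p` take their values from `ψ₁`, all others from `ψ₃`
  let ψ z := if ∀ q, s.sub q = some (var z) → p <+: q then ψ₁ z else ψ₃ z
  have hwψ : (app f ts).subst ψ = v₁ := by
    refine (subst_congr _ fun z q hq => ?_).trans (subst_eq_of_subst_eq_replaceAt hw h₁)
    simp only [ψ]
    split_ifs with hz
    · rfl
    · simp only [not_forall] at hz
      obtain ⟨q', hq', hpq'⟩ := hz
      exact ((hout z q' hq' hpq').trans (hin z q hq)).symm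
  refine ⟨ψ, fun z => by unfold ψ; split_ifs <;> simp, ?_⟩
  rw [subst_eq_replaceAt (χ := ψ₃) hw fun z q hq hz => ?_, h₃, hwψ, replaceAt_replaceAt,
    replaceAt_eq_self hb]
  simp only [ψ] at hz
  split_ifs at hz with hc
  exacts [hc q hq, absurd rfl hz]

end Term

theorem exists_constant_subseq {C : Type*} [Finite C] (f : ℕ → C) :
    ∃ c, ∃ e : ℕ → ℕ, StrictMono e ∧ ∀ n, f (e n) = c := by
  obtain ⟨c, hc⟩ := Finite.exists_infinite_fiber f
  obtain ⟨e, he, hfe⟩ := Nat.exists_strictMono_subsequence (P := fun n => f n = c) fun N => by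
    obtain ⟨n, hn, hNn⟩ := (Set.infinite_coe_iff.mp hc).exists_gt N
    exact ⟨n, hNn, hn⟩
  exact ⟨c, e, he, hfe⟩

/-- Infinite Ramsey theorem for pairs, with `P i j c` read as "the pair `i < j` may be given
colour `c`". -/
theorem exists_monochromatic_subseq {C : Type*} [Finite C] {P : ℕ → ℕ → C → Prop}
    (h : ∀ i j, i < j → ∃ c, P i j c) :
    ∃ g : ℕ → ℕ, StrictMono g ∧ ∃ c, ∀ i j, i < j → P (g i) (g j) c := by
  have step (σ : ℕ → ℕ) (hσ : StrictMono σ) :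
      ∃ c, ∃ e : ℕ → ℕ, StrictMono e ∧ ∀ m, P (σ 0) (σ (e m + 1)) c := by
    choose col hcol using fun m => h (σ 0) (σ (m + 1)) (hσ m.succ_pos)
    obtain ⟨c, e, he, hce⟩ := exists_constant_subseq col
    exact ⟨c, e, he, fun m => hce m ▸ hcol (e m)⟩
  choose col e he hcol using step
  -- `σ (n + 1)` is a subsequence of the tail of `σ n` on which every pair with the head `σ n 0`
  -- has the colour `col _ (σ n).2`
  let σ : ℕ → {σ : ℕ → ℕ // StrictMono σ} := fun n => Nat.rec ⟨id, strictMono_id⟩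
    (fun _ τ => ⟨τ.1 ∘ (· + 1) ∘ e τ.1 τ.2, τ.2.comp ((strictMono_id.add_const 1).comp (he _ _))⟩) n
  have hsucc (n : ℕ) : (σ (n + 1)).1 = (σ n).1 ∘ (· + 1) ∘ e _ (σ n).2 := rfl
  have hanti : Antitone fun n => Set.range (σ n).1 :=
    antitone_nat_of_succ_le fun n => hsucc n ▸ Set.range_comp_subset_range _ _
  let a n := (σ n).1 0
  have ha : StrictMono a := strictMono_nat_of_lt_succ fun n => by
    simp only [a, hsucc n]
    exact (σ n).2 (Nat.succ_pos _)
  have hcol' (n m : ℕ) (hnm : n < m) : P (a n) (a m) (col _ (σ n).2) := by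
    obtain ⟨k, hk⟩ := hanti (Nat.succ_le_of_lt hnm) ⟨0, rfl⟩
    simp only [a, ← hk, hsucc n]
    exact hcol _ _ k
  obtain ⟨c, e', he', hc⟩ := exists_constant_subseq fun n => col _ (σ n).2
  exact ⟨a ∘ e', ha.comp he', c, fun i j hij => hc i ▸ hcol' _ _ (he' hij)⟩

namespace RRC

variable {R : RRC F ar V Q} {ψ ψ₁ ψ₂ : V → GTerm F ar}

lemma IsSolution.of_forall_eq_or_eq (h₁ : R.IsSolution ψ₁) (h₂ : R.IsSolution ψ₂)
    (h : ∀ z, ψ z = ψ₁ z ∨ ψ z = ψ₂ z) : R.IsSolution ψ := by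
  refine ⟨fun z => ?_, fun z hz => ?_⟩ <;> rcases h z with e | e <;> rw [e]
  exacts [h₁.1 z, h₂.1 z, h₁.2 z hz, h₂.2 z hz]

lemma IsSolution.update [DecidableEq V] (hψ : R.IsSolution ψ) {y : V} {w : GTerm F ar}
    (hrun : R.A.run w = R.A.run (ψ y)) (hht : w.height ≤ (ψ y).height) :
    R.IsSolution (Function.update ψ y w) := by
  refine ⟨fun z => ?_, fun z hz => ?_⟩ <;> rcases eq_or_ne z y with rfl | hzy
  · simpa [hrun] using hψ.1 z
  · simpa [hzy] using hψ.1 z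
  · simpa using hht.trans (hψ.2 z hz)
  · simpa [hzy] using hψ.2 z hz

open Term in
theorem exists_subst_mem_lang_sdiff {S : Finset (Term F ar V)} {s : Term F ar V} {x : V}
    {p q : List ℕ} (hpq : p ≠ q) (hp : s.sub p = some (var x)) (hq : s.sub q = some (var x))
    {φ : ℕ → V → GTerm F ar} (hsol : ∀ i, R.IsSolution (φ i))
    (hinj : Function.Injective fun i => φ i x) (hmono : Monotone fun i => (φ i x).height)
    (hmix : ∀ i j, i < j → (s.subst (φ i)).replaceAt p (φ j x) ∈ R.lang ↑S) :
    ∃ i, s.subst (φ i) ∈ R.lang (↑S \ {s}) := by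
  classical
  have htp (i : ℕ) : (s.subst (φ i)).sub p = some (φ i x) := sub_subst hp
  have hrest (i j : ℕ) (hij : i < j) : ∃ c : ↥S, c.1 ≠ s ∧
      ∃ ψ, R.IsSolution ψ ∧ c.1.subst ψ = (s.subst (φ i)).replaceAt p (φ j x) := by
    obtain ⟨s', hs', ψ, hψ, he⟩ := hmix i j hij
    refine ⟨⟨s', hs'⟩, fun hs's => hinj.ne hij.ne' ?_, ψ, hψ, he.symm⟩
    rw [show s' = s from hs's] at he
    exact eq_of_subst_eq_replaceAt (r := []) (a := s.subst (φ i)) hp hq hpq (by simp [htp])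
      (by simpa using he.symm) (by simpa using (replaceAt_eq_self (htp i)).symm)
  obtain ⟨g, hg, ⟨s', hs'S⟩, hc⟩ := exists_monochromatic_subseq hrest
  obtain ⟨hs's, ψ₁, hψ₁, h₁⟩ := hc 0 1 one_pos
  obtain ⟨-, ψ₂, -, h₂⟩ := hc 0 2 two_pos
  obtain ⟨-, ψ₃, hψ₃, h₃⟩ := hc 1 2 one_lt_two
  have hmem (i : ℕ) (ψ : V → GTerm F ar) (hψ : R.IsSolution ψ) (he : s'.subst ψ = s.subst (φ i)) :
      s.subst (φ i) ∈ R.lang (↑S \ {s}) := ⟨s', ⟨hs'S, hs's⟩, ψ, hψ, he.symm⟩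
  rcases exists_app_or_var_prefix_of_sub_subst (s := s') (φ := ψ₁) (p := p)
    (by simp [h₁, sub_replaceAt_self, htp]) with ⟨f, ts, hw⟩ | ⟨p₀, y, r, rfl, hy⟩
  · obtain ⟨ψ, hψ, he⟩ := exists_subst_eq_of_sub_app hw (htp _) h₁ h₂ h₃
    exact ⟨_, hmem _ ψ (hψ₁.of_forall_eq_or_eq hψ₃ hψ) he⟩
  by_cases huniq : ∀ q₀, s'.sub q₀ = some (var y) → q₀ = p₀
  · obtain ⟨w, hw, hwr⟩ :
        ∃ w, (s.subst (φ (g 0))).sub p₀ = some w ∧ w.sub r = some (φ (g 0) x) := by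
      simpa [sub_append, Option.bind_eq_some_iff] using htp (g 0)
    obtain ⟨hψy, he⟩ := subst_update_eq_of_subst_eq_replaceAt hy huniq hw h₁
    -- compare `w = w[r ← u₀]` with `ψ₁ y = w[r ← u₁]`
    refine ⟨_, hmem _ _ (hψ₁.update ?_ ?_) he⟩ <;> rw [hψy] <;>
      nth_rw 1 [← replaceAt_eq_self hwr]
    · exact runC_replaceAt_congr _ _ w r (((hsol _).1 x).trans ((hsol _).1 x).symm)
    · exact height_replaceAt_mono w r (hmono (hg.monotone zero_le_one))
  · simp only [not_forall] at huniq
    obtain ⟨q₀, hq₀, hne⟩ := huniq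
    exact absurd (eq_of_subst_eq_replaceAt hy hq₀ (Ne.symm hne) (by simp [htp]) h₁ h₂)
      (hinj.ne (hg.injective.ne (by norm_num : 1 ≠ 2)))

end RRC

theorem not_regular_of_infiniteInstances_general {F V Q : Type} {ar : F → ℕ}
    (R : RRC F ar V Q) (S : Finset (Term F ar V)) (s : Term F ar V)
    (hs : s ∈ S) (hinf : InfiniteInstances R (↑S) s) :
    ¬ IsRegular (R.lang ↑S) := by
  obtain ⟨x, ⟨p, q, hpq, hp, hq⟩, φ, hsol, hnotin, hinj⟩ := hinf
  rintro ⟨Q', _, B, Facc, hL⟩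
  obtain ⟨c, e, he, hrun⟩ := exists_constant_subseq fun i => B.run (φ i x)
  obtain ⟨g, hg⟩ := wellQuasiOrdered_le.exists_monotone_subseq fun i => (φ (e i) x).height
  have hmix (i j : ℕ) : (s.subst (φ (e (g i)))).replaceAt p (φ (e (g j)) x) ∈ R.lang ↑S := by
    have hi : s.subst (φ (e (g i))) ∈ R.lang ↑S := ⟨s, hs, _, hsol _, rfl⟩
    rw [hL] at hi ⊢
    obtain ⟨qf, hqf, hrunf⟩ := hi
    exact ⟨qf, hqf, (Term.runC_replaceAt_of_sub _ _ (Term.sub_subst hp)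
      ((hrun _).trans (hrun _).symm)).trans hrunf⟩
  obtain ⟨i, hi⟩ := R.exists_subst_mem_lang_sdiff hpq hp hq (fun i => hsol _)
    (fun i j hij => by_contra fun hne => hinj _ _ ((he.injective.comp g.injective).ne hne) hij)
    (fun i j hij => hg i j hij) (fun i j _ => hmix i j)
  exact hnotin _ hi

/-- if some `s ∈ S` satisfies the infinite-instances property in
`⟨S,R⟩`, then `L(⟨S,R⟩)` is not regular. -/
theorem not_regular_of_infiniteInstances {F V Q : Type} {ar : F → ℕ}
    [Fintype F] [Fintype Q] [Fintype V]
    (R : RRC F ar V Q) (S : Finset (Term F ar V)) (s : Term F ar V)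
    (hs : s ∈ S) (hinf : InfiniteInstances R (↑S) s) :
    ¬ IsRegular (R.lang ↑S) :=
  not_regular_of_infiniteInstances_general R S s hs hinf

end RITRC
end

section
/- Let ⟨S,R⟩ be a set of terms with restricted regular constraints, R = ⟨A,V,C,W,h⟩. If every term s ∈ S is regular with respect to R, i.e., for each variable x occurring at least twice in s either |L(A,C(x))| is finite or x ∈ W, then L(⟨S,R⟩) is a regular term language. -/
namespace RITRC

variable {F V V' Q : Type} {ar : F → ℕ}

/-!
A variable that occurs twice in `s`, or whose height is bounded, has only finitely many
admissible values. Substituting every combination of them turns each `s ∈ S` into finitely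
many linear terms, and `L(⟨S,R⟩)` becomes the union of their instance languages under the
plain constraint `⟨A,C⟩`. Distinct arguments of a linear term share no variables, so its
instance language is built bottom-up: `f(L₁,…,Lₙ)` is recognised by running the automata of
the `Lᵢ` in parallel. Finite unions of regular languages are regular.
-/

namespace Term

lemma subst_var (t : Term F ar V) : t.subst .var = t := by
  induction t with
  | var x => rfl
  | app f ts ih => exact congrArg (Term.app f) (funext ih)

lemma subst_subst {V'' : Type} (t : Term F ar V) (σ : V → Term F ar V')
    (φ : V' → Term F ar V'') :
    (t.subst σ).subst φ = t.subst fun y => (σ y).subst φ := by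
  induction t with
  | var y => rfl
  | app f ts ih => exact congrArg (Term.app f) (funext ih)

lemma rename_subst_of_ground (g : GTerm F ar) (φ : V → GTerm F ar) :
    (g.rename Empty.elim : Term F ar V).subst φ = g := by
  rw [rename, subst_subst]
  convert subst_var g

lemma sub_app_cons_s5 (f : F) (ts : Fin (ar f) → Term F ar V) (i : Fin (ar f)) (p : List ℕ) :
    (Term.app f ts).sub (i.1 :: p) = (ts i).sub p := by
  simp [sub]

lemma sub_subst_eq_var {σ : V → Term F ar V'} {x : V'} :
    ∀ {t : Term F ar V} {p : List ℕ}, (t.subst σ).sub p = some (.var x) →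
      ∃ y p₁ p₂, p = p₁ ++ p₂ ∧ t.sub p₁ = some (.var y) ∧
        (σ y).sub p₂ = some (.var x)
  | .var y, p, h => ⟨y, [], p, rfl, rfl, h⟩
  | .app _ _, [], h => by simp [subst, sub] at h
  | .app f ts, i :: p, h => by
      by_cases hi : i < ar f
      · obtain ⟨y, p₁, p₂, rfl, h₁, h₂⟩ :=
          sub_subst_eq_var (t := ts ⟨i, hi⟩) (by simpa [subst, sub, hi] using h)
        exact ⟨y, i :: p₁, p₂, rfl, by simpa [sub, hi] using h₁, h₂⟩
      · simp [subst, sub, hi] at h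

lemma rename_ground_sub_ne_var (g : GTerm F ar) (p : List ℕ) (x : V) :
    (g.rename Empty.elim).sub p ≠ some (.var x) := fun h =>
  (sub_subst_eq_var h).choose.elim

lemma varOccurs_var (x : V) : (Term.var x : Term F ar V).varOccurs x := ⟨[], rfl⟩

lemma varOccurs_app {f : F} {ts : Fin (ar f) → Term F ar V} {x : V} (i : Fin (ar f))
    (h : (ts i).varOccurs x) : (Term.app f ts).varOccurs x :=
  let ⟨p, hp⟩ := h
  ⟨i.1 :: p, by rwa [sub_app_cons_s5]⟩

lemma occursTwice_app {f : F} {ts : Fin (ar f) → Term F ar V} {x : V} (i : Fin (ar f))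
    (h : (ts i).occursTwice x) : (Term.app f ts).occursTwice x :=
  let ⟨p, q, hpq, hp, hq⟩ := h
  ⟨i.1 :: p, i.1 :: q, by simpa using hpq, by rwa [sub_app_cons_s5], by rwa [sub_app_cons_s5]⟩

lemma occursTwice_app_of_ne {f : F} {ts : Fin (ar f) → Term F ar V} {x : V}
    {i j : Fin (ar f)} (hij : i ≠ j) (hi : (ts i).varOccurs x) (hj : (ts j).varOccurs x) :
    (Term.app f ts).occursTwice x :=
  let ⟨p, hp⟩ := hi
  let ⟨q, hq⟩ := hj
  ⟨i.1 :: p, j.1 :: q, by simp [Fin.val_ne_of_ne hij], by rwa [sub_app_cons_s5],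
    by rwa [sub_app_cons_s5]⟩

lemma subst_congr_s5 {φ ψ : V → Term F ar V'} :
    ∀ {t : Term F ar V}, (∀ x, t.varOccurs x → φ x = ψ x) → t.subst φ = t.subst ψ
  | .var x, h => h x (varOccurs_var x)
  | .app f _, h => congrArg (Term.app f) <| funext fun i =>
      subst_congr_s5 fun x hx => h x (varOccurs_app i hx)

lemma height_lt_app {f : F} (ts : Fin (ar f) → Term F ar V) (i : Fin (ar f)) :
    (ts i).height < (Term.app f ts).height :=
  Finset.le_sup (f := fun i => (ts i).height + 1) (Finset.mem_univ i)

lemma finite_height_lt [Finite F] (n : ℕ) : {t : GTerm F ar | t.height < n}.Finite := by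
  induction n with
  | zero => simp
  | succ n ih =>
    have := ih.to_subtype
    refine (Set.finite_range fun p : Σ f, Fin (ar f) → {t : GTerm F ar | t.height < n} =>
      Term.app p.1 fun i => p.2 i).subset ?_
    rintro (e | ⟨f, ts⟩) ht
    · exact e.elim
    · exact ⟨⟨f, fun i => ⟨ts i, by
        have := height_lt_app ts i; simp only [Set.mem_ofPred_eq] at ht ⊢; omega⟩⟩, rfl⟩

end Term

lemma allSome_some {n : ℕ} {α : Type} (a : Fin n → α) :
    allSome (fun i => some (a i)) = some a := by
  simp [allSome]

namespace DTA

lemma run_app (A : DTA F ar Q) (g : F) (us : Fin (ar g) → GTerm F ar) :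
    A.run (.app g us) = (allSome fun j => A.run (us j)).bind (A.δ g) := rfl

def pi {ι : Type} {Q : ι → Type} (A : ∀ i, DTA F ar (Q i)) :
    DTA F ar (∀ i, Option (Q i)) where
  δ g cs := some fun i => (allSome fun j => cs j i).bind ((A i).δ g)

lemma run_pi {ι : Type} {Q : ι → Type} (A : ∀ i, DTA F ar (Q i)) (u : GTerm F ar) :
    (pi A).run u = some fun i => (A i).run u := by
  induction u with
  | var e => exact e.elim
  | app g us ih => simp only [run_app, ih, allSome_some]; rfl

end DTA

def appLang (f : F) (L : Fin (ar f) → Set (GTerm F ar)) : Set (GTerm F ar) :=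
  {u | ∃ us : Fin (ar f) → GTerm F ar, (∀ i, us i ∈ L i) ∧ u = .app f us}

lemma app_mem_appLang_iff {f g : F} {L : Fin (ar f) → Set (GTerm F ar)}
    {us : Fin (ar g) → GTerm F ar} :
    Term.app g us ∈ appLang f L ↔
      ∃ h : g = f, ∀ i, us (Fin.cast (congrArg ar h).symm i) ∈ L i := by
  constructor
  · rintro ⟨us', hL, h⟩
    cases h
    exact ⟨rfl, hL⟩
  · rintro ⟨rfl, hL⟩
    exact ⟨us, hL, rfl⟩

lemma isRegular_empty : IsRegular (∅ : Set (GTerm F ar)) :=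
  ⟨PUnit, inferInstance, ⟨fun _ _ => none⟩, ∅, by simp⟩

lemma isRegular_lang [Fintype Q] (A : DTA F ar Q) (q : Q) : IsRegular (A.lang q) :=
  ⟨Q, inferInstance, A, {q}, by simp [DTA.lang]⟩

lemma isRegular_iUnion {ι : Type} [Finite ι] {L : ι → Set (GTerm F ar)}
    (h : ∀ i, IsRegular (L i)) : IsRegular (⋃ i, L i) := by
  classical
  have := Fintype.ofFinite ι
  choose Q _ A Acc hL using h
  refine ⟨_, inferInstance, DTA.pi A, {st | ∃ i, ∃ q ∈ Acc i, st i = some q}, ?_⟩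
  ext u
  simp [hL, DTA.run_pi]

def DTA.piApp {f : F} {Q : Fin (ar f) → Type} (A : ∀ i, DTA F ar (Q i))
    (Acc : ∀ i, Set (Q i)) :
    DTA F ar ((∀ i, Option (Q i)) × Prop) where
  δ g cs := ((DTA.pi A).δ g fun j => (cs j).1).map fun st =>
    (st, ∃ h : g = f, ∀ i, ∃ q ∈ Acc i, (cs (Fin.cast (congrArg ar h).symm i)).1 i = some q)

lemma DTA.run_piApp {f : F} {Q : Fin (ar f) → Type} (A : ∀ i, DTA F ar (Q i))
    (Acc : ∀ i, Set (Q i)) (u : GTerm F ar) :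
    (DTA.piApp A Acc).run u = some ((fun i => (A i).run u),
      u ∈ appLang f fun i => {t | ∃ q ∈ Acc i, (A i).run t = some q}) := by
  induction u with
  | var e => exact e.elim
  | app g us ih =>
    simp only [run_app, ih, allSome_some, app_mem_appLang_iff]
    rfl

lemma isRegular_appLang (f : F) {L : Fin (ar f) → Set (GTerm F ar)}
    (h : ∀ i, IsRegular (L i)) : IsRegular (appLang f L) := by
  choose Q _ A Acc hL using h
  obtain rfl := funext hL
  refine ⟨_, inferInstance, DTA.piApp A Acc, {st | st.2}, ?_⟩
  ext u
  simp [DTA.run_piApp]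

section Linear

variable (A : DTA F ar Q) (C : V → Q)

lemma langSingle_var (hne : ∀ y, (A.lang (C y)).Nonempty) (x : V) :
    langSingle {Term.var x} A C = A.lang (C x) := by
  classical
  ext u
  constructor
  · rintro ⟨_, rfl, φ, hφ, rfl⟩
    exact hφ x
  · intro hu
    refine ⟨_, rfl, Function.update (fun y => (hne y).some) x u, fun y => ?_,
      by simp [Term.subst]⟩
    by_cases hy : y = x
    · subst hy; simpa [DTA.lang] using hu
    · simpa [DTA.lang, hy] using (hne y).some_mem

lemma langSingle_app (hne : ∀ y, (A.lang (C y)).Nonempty) {f : F}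
    {ts : Fin (ar f) → Term F ar V}
    (hlin : ∀ x, ¬ (Term.app f ts).occursTwice x) :
    langSingle {Term.app f ts} A C = appLang f fun i => langSingle {ts i} A C := by
  classical
  ext u
  constructor
  · rintro ⟨_, rfl, φ, hφ, rfl⟩
    exact ⟨fun i => (ts i).subst φ, fun i => ⟨ts i, rfl, φ, hφ, rfl⟩, rfl⟩
  · rintro ⟨us, hus, rfl⟩
    choose s hs φ hφ hus using hus
    obtain rfl : ts = s := funext fun i => (hs i).symm
    -- by linearity each variable occurs in at most one `ts i`, so the `φ i` can be glued
    have hunique : ∀ {x i j}, (ts i).varOccurs x → (ts j).varOccurs x → i = j :=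
      fun hi hj => by_contra fun hij => hlin _ (Term.occursTwice_app_of_ne hij hi hj)
    let ψ x := if h : ∃ i, (ts i).varOccurs x then φ h.choose x else (hne x).some
    refine ⟨_, rfl, ψ, fun x => ?_, congrArg (Term.app f) (funext fun i => ?_)⟩
    · by_cases h : ∃ i, (ts i).varOccurs x
      · simpa [ψ, h] using hφ h.choose x
      · simpa [DTA.lang, ψ, h] using (hne x).some_mem
    · rw [hus i]
      refine Term.subst_congr_s5 fun x hx => ?_
      have h : ∃ i, (ts i).varOccurs x := ⟨i, hx⟩
      simp only [ψ, dif_pos h, hunique h.choose_spec hx]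

theorem isRegular_langSingle_of_linear [Fintype Q] {t : Term F ar V}
    (hlin : ∀ x, ¬ t.occursTwice x) : IsRegular (langSingle {t} A C) := by
  by_cases hne : ∀ y, (A.lang (C y)).Nonempty
  · induction t with
    | var x => exact langSingle_var A C hne x ▸ isRegular_lang A (C x)
    | app f ts ih =>
      rw [langSingle_app A C hne hlin]
      exact isRegular_appLang f fun i => ih i fun x h => hlin x (Term.occursTwice_app i h)
  · obtain ⟨y, hy⟩ := not_forall.mp hne
    convert isRegular_empty
    refine Set.eq_empty_of_forall_notMem fun u ⟨_, _, φ, hφ, _⟩ => ?_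
    exact hy ⟨φ y, hφ y⟩

end Linear

namespace RRC

variable (R : RRC F ar V Q)

def candidates (x : V) : Set (GTerm F ar) :=
  {u | R.A.run u = some (R.C x) ∧ (x ∈ R.W → u.height ≤ R.hgt)}

lemma isSolution_iff (φ : V → GTerm F ar) : R.IsSolution φ ↔ ∀ x, φ x ∈ R.candidates x :=
  ⟨fun h x => ⟨h.1 x, h.2 x⟩, fun h => ⟨fun x => (h x).1, fun x => (h x).2⟩⟩

/-- The variables of `s` whose instances are enumerated rather than left to the automaton. -/
def Grounded (s : Term F ar V) (x : V) : Prop := s.occursTwice x ∨ x ∈ R.W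

open Classical in
noncomputable def ground (s : Term F ar V) (c : {x // R.Grounded s x} → GTerm F ar) :
    Term F ar V :=
  s.subst fun y => if h : R.Grounded s y then (c ⟨y, h⟩).rename Empty.elim else .var y

lemma not_occursTwice_ground (s : Term F ar V) (c : {x // R.Grounded s x} → GTerm F ar)
    (x : V) : ¬ (R.ground s c).occursTwice x := by
  have hocc : ∀ {p}, (R.ground s c).sub p = some (.var x) → s.sub p = some (.var x) ∧
      ¬ R.Grounded s x := fun hp => by
    obtain ⟨y, p₁, p₂, rfl, h₁, h₂⟩ := Term.sub_subst_eq_var hp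
    by_cases hy : R.Grounded s y
    · simp only [dif_pos hy] at h₂
      exact absurd h₂ (Term.rename_ground_sub_ne_var _ _ _)
    · simp only [dif_neg hy] at h₂
      cases p₂ with
      | nil => cases h₂; exact ⟨by simpa using h₁, hy⟩
      | cons => simp [Term.sub] at h₂
  rintro ⟨p, q, hpq, hp, hq⟩
  exact (hocc hp).2 (.inl ⟨p, q, hpq, (hocc hp).1, (hocc hq).1⟩)

lemma ground_subst (s : Term F ar V) (c : {x // R.Grounded s x} → GTerm F ar)
    (ψ : V → GTerm F ar) [DecidablePred (R.Grounded s)] :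
    (R.ground s c).subst ψ =
      s.subst fun y => if h : R.Grounded s y then c ⟨y, h⟩ else ψ y := by
  rw [ground, Term.subst_subst]
  congr 1
  funext y
  by_cases hy : R.Grounded s y
  · simp [hy, Term.rename_subst_of_ground]
  · simp [hy, Term.subst]

lemma lang_eq_iUnion_langSingle_ground (S : Set (Term F ar V)) :
    R.lang S = ⋃ p : Σ s : S, ∀ x : {x // R.Grounded s x}, R.candidates x,
      langSingle {R.ground p.1 fun x => p.2 x} R.A R.C := by
  classical
  ext u
  simp only [Set.mem_iUnion]
  constructor
  · rintro ⟨s, hs, φ, hφ, rfl⟩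
    rw [isSolution_iff] at hφ
    refine ⟨⟨⟨s, hs⟩, fun x => ⟨φ x, hφ x⟩⟩, _, rfl, φ, fun x => (hφ x).1, ?_⟩
    rw [ground_subst]
    refine congrArg s.subst (funext fun y => ?_)
    split_ifs <;> rfl
  · rintro ⟨⟨⟨s, hs⟩, c⟩, _, rfl, ψ, hψ, rfl⟩
    refine ⟨s, hs, _, (R.isSolution_iff _).2 fun x => ?_, R.ground_subst _ _ _⟩
    by_cases hx : R.Grounded s x
    · simp only [dif_pos hx]
      exact (c ⟨x, hx⟩).2
    · simp only [dif_neg hx]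
      exact ⟨hψ x, fun hW => absurd (.inr hW) hx⟩

lemma finite_candidates [Finite F] {s : Term F ar V}
    (hs : ∀ x, s.occursTwice x → (R.A.lang (R.C x)).Finite ∨ x ∈ R.W) {x : V}
    (hx : R.Grounded s x) : (R.candidates x).Finite := by
  have hW : x ∈ R.W → (R.candidates x).Finite := fun hW =>
    (Term.finite_height_lt (R.hgt + 1)).subset fun u hu => Nat.lt_succ_of_le (hu.2 hW)
  rcases hx with h2 | hxW
  · exact (hs x h2).elim (fun hfin => hfin.subset fun u hu => hu.1) hW
  · exact hW hxW

end RRC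

/-- if every term of `S` is regular with respect to `R`
(each variable occurring at least twice in it has a finite language or is
height-restricted), then `L(⟨S,R⟩)` is regular. -/
theorem regular_of_all_terms_regular {F V Q : Type} {ar : F → ℕ}
    [Fintype F] [Fintype Q] [Fintype V]
    (R : RRC F ar V Q) (S : Finset (Term F ar V))
    (hreg : ∀ s ∈ S, ∀ x : V, Term.occursTwice s x →
      (R.A.lang (R.C x)).Finite ∨ x ∈ R.W) :
    IsRegular (R.lang ↑S) := by
  have (s : (S : Set (Term F ar V))) (x : {x // R.Grounded s x}) :
      Finite (R.candidates x) :=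
    (R.finite_candidates (hreg s s.2) x.2).to_subtype
  rw [R.lang_eq_iUnion_langSingle_ground]
  exact isRegular_iUnion fun p =>
    isRegular_langSingle_of_linear R.A R.C (R.not_occursTwice_ground p.1 _)

end RITRC
end

section
/- Let R = ⟨A,V,C,W,h⟩ be a restricted regular constraint over Σ and let s, t ∈ T_Σ(V). If s is determined at all non-variable positions of t and s is not structurally subsumed by t with respect to R, then L(⟨{s},R⟩) and L(⟨{t},R⟩) are disjoint. -/
namespace RITRC

variable {F V V' Q : Type} {ar : F → ℕ}

/-! If `φ(s) = ψ(t)`, then at a non-variable position `p` of `t` the term `s` is either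
non-variable, hence labelled by the same symbol as `t`, or has a constant strictly above `p`,
which is impossible because `φ(s)` would then have no position `p`. Hence `s` carries the
symbols of `t` at all of its non-variable positions, so every position of `t` is one of `s`,
and there the subterms of `s` and `t` have a common instance; since both substitutions respect
`C`, the automaton reaches the same state on the two subterms. -/

theorem Term.sub_append_s9 (u : Term F ar V) (p q : List ℕ) :
    u.sub (p ++ q) = (u.sub p).bind (·.sub q) := by
  induction p generalizing u with
  | nil => simp [Term.sub]
  | cons i p ih =>
    cases u with
    | var x => simp [Term.sub]
    | app f ts =>
      simp only [List.cons_append, Term.sub]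
      split
      · exact ih _
      · rfl

theorem Term.sub_subst_s9 (φ : V → Term F ar V') {u up : Term F ar V} {p : List ℕ}
    (h : u.sub p = some up) : (u.subst φ).sub p = some (up.subst φ) := by
  induction p generalizing u with
  | nil =>
    simp only [Term.sub, Option.some.injEq] at h ⊢
    rw [h]
  | cons i p ih =>
    cases u with
    | var x => simp [Term.sub] at h
    | app f ts =>
      simp only [Term.sub] at h
      split at h
      · simp only [Term.subst, Term.sub]
        rw [dif_pos ‹_›]
        exact ih h
      · cases h

theorem Term.sub_append_cons_eq_none {u : Term F ar V} {p : List ℕ} {f : F}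
    {ts : Fin (ar f) → Term F ar V} (hu : u.sub p = some (.app f ts)) (hf : ar f = 0)
    (j : ℕ) (q : List ℕ) : u.sub (p ++ j :: q) = none := by
  simp [Term.sub_append_s9, hu, Term.sub, hf]

theorem DTA.run_subst (A : DTA F ar Q) {C : V → Q} {φ : V → GTerm F ar}
    (hφ : ∀ x, A.run (φ x) = some (C x)) (u : Term F ar V) :
    A.run (u.subst φ) = A.runC C u := by
  induction u with
  | var x => exact hφ x
  | app f ts ih =>
    simp only [Term.subst, DTA.run, DTA.runC] at ih ⊢
    simp only [ih]

theorem Term.exists_sub_of_forall_sub_app {s t : Term F ar V}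
    (h : ∀ p f ts, t.sub p = some (.app f ts) → ∃ ss, s.sub p = some (.app f ss))
    {p : List ℕ} {tp : Term F ar V} (ht : t.sub p = some tp) : ∃ sp, s.sub p = some sp := by
  induction p generalizing s t with
  | nil => exact ⟨s, by simp [Term.sub]⟩
  | cons i p ih =>
    cases t with
    | var x => simp [Term.sub] at ht
    | app f ts =>
      obtain ⟨ss, hs⟩ := h [] f ts (by simp [Term.sub])
      simp only [Term.sub, Option.some.injEq] at hs
      subst hs
      simp only [Term.sub] at ht ⊢
      split at ht
      · rw [dif_pos ‹_›]
        refine ih (fun q g us hq => ?_) ht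
        obtain ⟨vs, hv⟩ := h (i :: q) g us (by simp [Term.sub, *])
        exact ⟨vs, by simpa [Term.sub, *] using hv⟩
      · cases ht

section CommonInstance

variable {φ ψ : V → Term F ar V'} {s t : Term F ar V} (heq : s.subst φ = t.subst ψ)
include heq

theorem Term.subst_sub_eq {p : List ℕ} {sp tp : Term F ar V} (hs : s.sub p = some sp)
    (ht : t.sub p = some tp) : sp.subst φ = tp.subst ψ :=
  Option.some.inj <| by rw [← Term.sub_subst_s9 φ hs, heq, Term.sub_subst_s9 ψ ht]

theorem Term.exists_sub_app_of_subst_eq {p : List ℕ} (hdet : s.determinedAt p) {f : F}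
    {ts : Fin (ar f) → Term F ar V} (ht : t.sub p = some (.app f ts)) :
    ∃ ss, s.sub p = some (.app f ss) := by
  obtain ⟨g, ss, hs⟩ : s.isNonVarPos p := by
    rcases hdet with hs | ⟨p', ⟨q, rfl⟩, g, ss, hs, hg⟩
    · exact hs
    cases q with
    | nil => exact ⟨g, ss, by rwa [List.append_nil] at *⟩
    | cons j q =>
      have hnone := Term.sub_append_cons_eq_none (Term.sub_subst_s9 φ hs) hg j q
      rw [heq, Term.sub_subst_s9 ψ ht] at hnone
      cases hnone
  have hroot := Term.subst_sub_eq heq hs ht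
  simp only [Term.subst, Term.app.injEq] at hroot
  obtain rfl := hroot.1
  exact ⟨ss, hs⟩

end CommonInstance

theorem structSub_of_subst_eq {A : DTA F ar Q} {C : V → Q} {φ ψ : V → GTerm F ar}
    (hφ : ∀ x, A.run (φ x) = some (C x)) (hψ : ∀ x, A.run (ψ x) = some (C x))
    {s t : Term F ar V} (heq : s.subst φ = t.subst ψ)
    (hdet : ∀ p, t.isNonVarPos p → s.determinedAt p) : StructSub A C s t := by
  have hroot : ∀ p f ts, t.sub p = some (.app f ts) → ∃ ss, s.sub p = some (.app f ss) :=
    fun p f ts ht => Term.exists_sub_app_of_subst_eq heq (hdet p ⟨f, ts, ht⟩) ht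
  refine ⟨fun p f ts ht => ?_, fun p tp ht => ?_⟩
  · obtain ⟨ss, hs⟩ := hroot p f ts ht
    exact ⟨_, hs, rfl⟩
  · obtain ⟨sp, hs⟩ := Term.exists_sub_of_forall_sub_app hroot ht
    refine ⟨sp, hs, ?_⟩
    rw [← A.run_subst hψ, ← A.run_subst hφ, Term.subst_sub_eq heq hs ht]

theorem disjoint_of_not_structSub_general {F V Q : Type} {ar : F → ℕ}
    (R : RRC F ar V Q) (s t : Term F ar V)
    (hdet : ∀ p : List ℕ, t.isNonVarPos p → s.determinedAt p)
    (hnsub : ¬ StructSub R.A R.C s t) :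
    Disjoint (R.lang {s}) (R.lang {t}) := by
  rw [Set.disjoint_left]
  rintro _ ⟨_, rfl, φ, hφ, rfl⟩ ⟨_, rfl, ψ, hψ, heq⟩
  exact hnsub (structSub_of_subst_eq hφ.1 hψ.1 heq hdet)

/-- if `s` is determined at all non-variable positions of `t` and
`s` is not structurally subsumed by `t`, then `L(⟨{s},R⟩)` and `L(⟨{t},R⟩)`
are disjoint. -/
theorem disjoint_of_not_structSub {F V Q : Type} {ar : F → ℕ}
    [Fintype F] [Fintype Q] [Fintype V]
    (R : RRC F ar V Q) (s t : Term F ar V)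
    (hdet : ∀ p : List ℕ, t.isNonVarPos p → s.determinedAt p)
    (hnsub : ¬ StructSub R.A R.C s t) :
    Disjoint (R.lang {s}) (R.lang {t}) :=
  disjoint_of_not_structSub_general R s t hdet hnsub

end RITRC
end

section
/- Let R = ⟨A,V,C,W,h⟩ be a restricted regular constraint over Σ and let s, t_1, t_2 ∈ T_Σ(V). If t_1 and t_2 are structurally similar but not structurally equal with respect to R, and s is structurally subsumed by t_1 with respect to R, then s is not structurally subsumed by t_2 with respect to R. -/
namespace RITRC

variable {F V V' Q : Type} {ar : F → ℕ}

lemma sub_rename {F V V' : Type} {ar : F → ℕ} (ρ : V → V') (t : Term F ar V) (p : List ℕ) :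
    (t.rename ρ).sub p = (t.sub p).map (Term.rename ρ) := by
  induction t generalizing p with
  | var x => cases p <;> simp [Term.rename, Term.subst, Term.sub]
  | app f ts ih =>
    cases p with
    | nil => simp [Term.rename, Term.subst, Term.sub]
    | cons i p =>
      simp only [Term.rename, Term.subst, Term.sub]
      split <;> simp_all [Term.rename]

/-- if `t₁` and `t₂` are structurally similar but not structurally
equal w.r.t. `R`, and `s` is structurally subsumed by `t₁`, then `s` is not
structurally subsumed by `t₂`. -/
theorem not_structSub_of_structSub {F V Q : Type} {ar : F → ℕ}
    [Fintype F] [Fintype Q] [Fintype V]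
    (R : RRC F ar V Q) (s t₁ t₂ : Term F ar V)
    (hsim : StructSim t₁ t₂) (hneq : ¬ StructEq R.C t₁ t₂)
    (hsub : StructSub R.A R.C s t₁) :
    ¬ StructSub R.A R.C s t₂ := by
  intro h₂
  -- extract a bad position
  have : ∃ p x y, t₁.sub p = some (Term.var x) ∧ t₂.sub p = some (Term.var y)
      ∧ R.C x ≠ R.C y := by
    by_contra hc
    push_neg at hc
    exact hneq ⟨hsim, fun p x y h1 h2 => hc p x y h1 h2⟩
  obtain ⟨p, x, y, hx, hy, hxy⟩ := this
  obtain ⟨sp, hsp, hrun1⟩ := hsub.2 p _ hx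
  obtain ⟨sp', hsp', hrun2⟩ := h₂.2 p _ hy
  rw [hsp] at hsp'
  injection hsp' with e
  subst e
  rw [← hrun1] at hrun2
  simp [DTA.runC] at hrun2
  exact hxy hrun2.symm

end RITRC
end
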